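/- arXiv:2102.01967 — 2 statements merged into one kernel-verified Lean document; each statement's English description precedes it below -/
import Mathlib

section
/- Let r be a positive integer and m ≠ 1 a squarefree rational integer with m ≡ 2 or 3 (mod 4), such that F(x) = x^(2^r) − m is irreducible over ℚ, and let α be a complex root of F and K = ℚ(α). Then ℤ[α] is integrally closed, i.e. ℤ[α] equals the ring of integers of K, for every positive integer r. -/
open Polynomial NumberField

/-!
The discriminant of the power basis of `α` is `± 2 ^ (r * 2 ^ r) * m ^ (2 ^ r - 1)`, so it
suffices to show that `ℤ[α]` is `p`-maximal for `p = 2` and for every prime `p ∣ m`. For `p ∣ m`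
this holds because `X ^ 2 ^ r - m` is `p`-Eisenstein, `m` being squarefree. If `2 ∤ m`, then
`m ≡ 3 (mod 4)` and the minimal polynomial `(X + 1) ^ 2 ^ r - m` of `α - 1` is `2`-Eisenstein:
`2` divides the inner binomial coefficients of `(X + 1) ^ 2 ^ r`, and `1 - m ≡ 2 (mod 4)`.
-/

namespace Polynomial

theorem isEisensteinAt_X_pow_sub_C {R : Type*} [CommRing R] {n : ℕ} (hn : n ≠ 0) {p a : R}
    (hp : ¬IsUnit p) (hpa : p ∣ a) (hpa2 : ¬p ^ 2 ∣ a) :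
    (X ^ n - C a).IsEisensteinAt (Submodule.span R {p}) := by
  have : Nontrivial R := ⟨p, 1, fun h => hp (h ▸ isUnit_one)⟩
  rw [Ideal.submodule_span_eq]
  refine (monic_X_pow_sub_C a hn).isEisensteinAt_of_mem_of_notMem
    (Ideal.span_singleton_ne_top hp) (fun {i} hi => ?_) ?_
  · rw [natDegree_X_pow_sub_C] at hi
    rw [coeff_sub, coeff_X_pow, if_neg hi.ne, coeff_C, Ideal.mem_span_singleton]
    split_ifs <;> simp [hpa]
  · rwa [coeff_sub, coeff_X_pow, if_neg (Ne.symm hn), coeff_C_zero, zero_sub,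
      Ideal.span_singleton_pow, Ideal.mem_span_singleton, dvd_neg]

theorem isEisensteinAt_X_add_one_pow_prime_pow_sub_C {p : ℕ} (hp : p.Prime) (r : ℕ) {m : ℤ}
    (h1 : (p : ℤ) ∣ 1 - m) (h2 : ¬(p : ℤ) ^ 2 ∣ 1 - m) :
    ((X + 1 : ℤ[X]) ^ p ^ r - C m).IsEisensteinAt (Submodule.span ℤ {(p : ℤ)}) := by
  have hmonic : ((X + 1 : ℤ[X]) ^ p ^ r).Monic := (monic_X_add_C 1).pow _
  have hdeg : ((X + 1 : ℤ[X]) ^ p ^ r).natDegree = p ^ r := by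
    rw [natDegree_pow, ← C_1, natDegree_X_add_C, mul_one]
  rw [Ideal.submodule_span_eq]
  refine (hmonic.sub_of_left ?_).isEisensteinAt_of_mem_of_notMem
    (Ideal.span_singleton_ne_top (Nat.prime_iff_prime_int.1 hp).not_isUnit) (fun {i} hi => ?_) ?_
  · exact degree_C_le.trans_lt
      (natDegree_pos_iff_degree_pos.1 (by rw [hdeg]; exact pow_pos hp.pos r))
  · rw [natDegree_sub_C, hdeg] at hi
    rw [coeff_sub, coeff_X_add_one_pow, coeff_C, Ideal.mem_span_singleton]
    split_ifs with hi0
    · simpa [hi0] using h1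
    · rw [sub_zero]
      exact Int.natCast_dvd_natCast.2 (hp.dvd_choose_pow hi0 hi.ne)
  · rwa [coeff_sub, coeff_X_add_one_pow, coeff_C_zero, Nat.choose_zero_right, Nat.cast_one,
      Ideal.span_singleton_pow, Ideal.mem_span_singleton]

end Polynomial

theorem minpoly.eq_X_pow_sub_C_of_irreducible {K L : Type*} [Field K] [Field L] [Algebra K L]
    {n : ℕ} (hn : n ≠ 0) {a : K} (hirr : Irreducible (X ^ n - C a)) {x : L}
    (hx : x ^ n = algebraMap K L a) : minpoly K x = X ^ n - C a :=
  (minpoly.eq_of_irreducible_of_monic hirr (by simp [hx]) (monic_X_pow_sub_C a hn)).symm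

theorem minpoly.eq_of_minpoly_eq_map {R K S : Type*} [CommRing R] [IsDomain R]
    [IsIntegrallyClosed R] [Field K] [Algebra R K] [IsFractionRing R K] [CommRing S] [IsDomain S]
    [Algebra R S] [Algebra K S] [IsScalarTower R K S] {s : S} (hs : IsIntegral R s) {f : R[X]}
    (hf : minpoly K s = f.map (algebraMap R K)) : minpoly R s = f :=
  map_injective _ (IsFractionRing.injective R K) (by
    rw [← minpoly.isIntegrallyClosed_eq_field_fractions' K hs, hf])

theorem Algebra.adjoin_singleton_sub_one {R A : Type*} [CommRing R] [Ring A] [Algebra R A]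
    (x : A) : adjoin R {x - 1} = adjoin R {x} := by
  apply le_antisymm <;> apply adjoin_singleton_le
  · exact sub_mem (self_mem_adjoin_singleton R x) (one_mem _)
  · simpa using add_mem (self_mem_adjoin_singleton R (x - 1)) (one_mem _)

theorem Algebra.discr_powerBasis_of_minpoly_eq_X_pow_sub_C {R K L : Type*} [CommRing R] [Field K]
    [Field L] [Algebra R K] [Algebra K L] [Algebra.IsSeparable K L] (pb : PowerBasis K L) {a : R}
    (h : minpoly K pb.gen = X ^ pb.dim - C (algebraMap R K a)) :
    discr K pb.basis = algebraMap R K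
      ((-1) ^ (pb.dim * (pb.dim - 1) / 2) * (pb.dim : R) ^ pb.dim *
        ((-1) ^ (pb.dim + 1) * a) ^ (pb.dim - 1)) := by
  have := pb.finite
  have hnorm : Algebra.norm K pb.gen = (-1) ^ (pb.dim + 1) * algebraMap R K a := by
    rw [Algebra.PowerBasis.norm_gen_eq_coeff_zero_minpoly, h, coeff_sub, coeff_X_pow,
      if_neg pb.dim_pos.ne, coeff_C_zero]
    ring
  rw [discr_powerBasis_eq_norm, h, derivative_sub, derivative_C, sub_zero, derivative_X_pow,
    map_mul, aeval_C, map_pow, aeval_X, map_mul, Algebra.norm_algebraMap, map_pow, hnorm,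
    pb.finrank]
  simp only [map_mul, map_pow, map_neg, map_one, map_natCast, mul_assoc]

theorem Prime.dvd_or_dvd_of_dvd_neg_one_pow_mul {R : Type*} [CommRing R] {p c m : R}
    (hp : Prime p) {i j k l : ℕ} (h : p ∣ (-1) ^ i * c ^ j * ((-1) ^ k * m) ^ l) :
    p ∣ c ∨ p ∣ m := by
  have hunit : ∀ s, ¬p ∣ (-1 : R) ^ s := fun s hs =>
    hp.not_isUnit (isUnit_of_dvd_unit hs (isUnit_one.neg.pow s))
  rcases hp.dvd_or_dvd h with h | h
  · exact .inl (hp.dvd_of_dvd_pow ((hp.dvd_or_dvd h).resolve_left (hunit i)))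
  · exact .inr ((hp.dvd_or_dvd (hp.dvd_of_dvd_pow h)).resolve_left (hunit k))

theorem Submodule.mem_of_smul_mem_of_forall_prime_dvd {R M : Type*} [CommRing R] [IsDomain R]
    [UniqueFactorizationMonoid R] [AddCommGroup M] [Module R M] (S T : Submodule R M) {d : R}
    (hd : d ≠ 0) (hS : ∀ p, Prime p → p ∣ d → ∀ z ∈ T, p • z ∈ S → z ∈ S) {z : M} (hz : z ∈ T)
    (hdz : d • z ∈ S) : z ∈ S := by
  induction d using UniqueFactorizationMonoid.induction_on_prime generalizing z with
  | h₁ => exact absurd rfl hd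
  | h₂ u hu => simpa [smul_smul] using S.smul_mem hu.unit⁻¹.val hdz
  | h₃ a p ha hp ih =>
    refine ih ha (fun q hq hqa => hS q hq (hqa.mul_left p)) hz ?_
    exact hS p hp (dvd_mul_right p a) _ (T.smul_mem a hz) (by rwa [smul_smul])

namespace Subalgebra

section

variable {R L : Type*} [CommRing R] [CommRing L] [Algebra R L]

/-- `A` is `p`-maximal: `p` does not divide the index of `A` in the integral closure of `R`. -/
def IsPMaximal (A : Subalgebra R L) (p : R) : Prop :=
  ∀ z : L, IsIntegral R z → p • z ∈ A → z ∈ A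

theorem IsPMaximal.of_associated {A : Subalgebra R L} {p q : R} (h : A.IsPMaximal q)
    (hpq : Associated p q) : A.IsPMaximal p := by
  obtain ⟨u, rfl⟩ := hpq
  intro z hz hpz
  exact h z hz (by rw [mul_comm, mul_smul]; exact A.smul_mem hpz _)

end

variable {R K L : Type*} [CommRing R] [IsDomain R] [Field K] [Field L] [Algebra R K]
  [IsFractionRing R K] [Algebra K L] [Algebra R L] [IsScalarTower R K L]

theorem isPMaximal_adjoin_of_minpoly_isEisensteinAt [IsIntegrallyClosed R] {x : L}
    (hx : IsIntegral R x) (hgen : Algebra.adjoin K {x} = ⊤) {p : R} (hp : Prime p)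
    (hei : (minpoly R x).IsEisensteinAt (Submodule.span R {p})) :
    (Algebra.adjoin R {x}).IsPMaximal p := fun z hz hpz => by
  let B := PowerBasis.ofAdjoinEqTop (hx.tower_top (A := K)) hgen
  have hB : B.gen = x := PowerBasis.ofAdjoinEqTop_gen _ _
  rw [← hB] at hx hei hpz ⊢
  exact mem_adjoin_of_smul_prime_smul_of_minpoly_isEisensteinAt hp hx hz hpz hei

end Subalgebra

theorem PowerBasis.integralClosure_le_adjoin_of_forall_isPMaximal {R K L : Type*} [CommRing R]
    [IsDomain R] [UniqueFactorizationMonoid R] [Field K] [Field L] [Algebra R K]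
    [IsFractionRing R K] [Algebra K L] [Algebra R L] [IsScalarTower R K L]
    [Algebra.IsSeparable K L] (B : PowerBasis K L) (hB : IsIntegral R B.gen) {d : R}
    (hd : Algebra.discr K B.basis = algebraMap R K d)
    (hmax : ∀ p, Prime p → p ∣ d → (Algebra.adjoin R {B.gen}).IsPMaximal p) :
    integralClosure R L ≤ Algebra.adjoin R {B.gen} := by
  intro z hz
  have := B.finite
  have hd0 : d ≠ 0 := by
    rintro rfl
    exact Algebra.discr_not_zero_of_basis K B.basis (by rw [hd, map_zero])
  have hdz := Algebra.discr_mul_isIntegral_mem_adjoin K hB hz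
  rw [hd, algebraMap_smul] at hdz
  exact Submodule.mem_of_smul_mem_of_forall_prime_dvd (Algebra.adjoin R {B.gen}).toSubmodule
    (integralClosure R L).toSubmodule hd0 (fun p hp hpd z hz => hmax p hp hpd z hz) hz hdz

theorem NumberField.RingOfIntegers.adjoin_eq_top_of_integralClosure_le {K : Type*} [Field K]
    {α : 𝓞 K} (h : integralClosure ℤ K ≤ Algebra.adjoin ℤ {(α : K)}) :
    Algebra.adjoin ℤ {α} = ⊤ := by
  rw [eq_top_iff]
  intro z _
  obtain ⟨w, hw, hwz⟩ :
      (z : K) ∈ (Algebra.adjoin ℤ {α}).map (IsScalarTower.toAlgHom ℤ (𝓞 K) K) := by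
    rw [AlgHom.map_adjoin, Set.image_singleton]
    exact h z.isIntegral_coe
  rwa [← RingOfIntegers.coe_injective hwz]

theorem integralClosure_le_adjoin_of_minpoly_eq_X_pow_sub_C {K : Type*} [Field K]
    [NumberField K] {x : K} (hx : IsIntegral ℤ x) (hgen : Algebra.adjoin ℚ {x} = ⊤) {n : ℕ}
    {m : ℤ} (hmin : minpoly ℚ x = X ^ n - C (m : ℚ))
    (hmax : ∀ p : ℤ, Prime p → p ∣ n ∨ p ∣ m → (Algebra.adjoin ℤ {x}).IsPMaximal p) :
    integralClosure ℤ K ≤ Algebra.adjoin ℤ {x} := by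
  let B := PowerBasis.ofAdjoinEqTop hx.tower_top hgen
  have hBgen : B.gen = x := PowerBasis.ofAdjoinEqTop_gen _ _
  have hBdim : B.dim = n := by rw [PowerBasis.ofAdjoinEqTop_dim, hmin, natDegree_X_pow_sub_C]
  have hdiscr := Algebra.discr_powerBasis_of_minpoly_eq_X_pow_sub_C B
    (by rw [hBgen, hBdim, hmin, eq_intCast])
  rw [← hBgen] at hx hmax ⊢
  refine B.integralClosure_le_adjoin_of_forall_isPMaximal hx hdiscr fun p hp hpd => hmax p hp ?_
  rw [← hBdim]
  exact hp.dvd_or_dvd_of_dvd_neg_one_pow_mul hpd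

theorem isPMaximal_adjoin_two_of_emod_four_eq_three {K : Type*} [Field K] [CharZero K] {x : K}
    (hx : IsIntegral ℤ x) (hgen : Algebra.adjoin ℚ {x} = ⊤) {r : ℕ} {m : ℤ}
    (hmin : minpoly ℚ x = X ^ 2 ^ r - C (m : ℚ)) (hm : m % 4 = 3) :
    (Algebra.adjoin ℤ {x}).IsPMaximal 2 := by
  have hmin' : minpoly ℤ (x - 1) = (X + 1) ^ 2 ^ r - C m := by
    refine minpoly.eq_of_minpoly_eq_map (K := ℚ) (hx.sub isIntegral_one) ?_
    rw [← map_one (algebraMap ℚ K), minpoly.sub_algebraMap, hmin]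
    simp [sub_comp]
  rw [← Algebra.adjoin_singleton_sub_one] at hgen ⊢
  refine Subalgebra.isPMaximal_adjoin_of_minpoly_isEisensteinAt (K := ℚ) (hx.sub isIntegral_one)
    hgen Int.prime_two ?_
  rw [hmin']
  exact_mod_cast isEisensteinAt_X_add_one_pow_prime_pow_sub_C Nat.prime_two r (m := m)
    (by omega) (by norm_num; omega)

theorem pure_two_power_field_integrally_closed_general
    (r : ℕ) (m : ℤ) (hm : Squarefree m)
    (hmod : m % 4 = 2 ∨ m % 4 = 3)
    (hF : Irreducible ((X : ℚ[X]) ^ 2 ^ r - C (m : ℚ)))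
    (K : Type*) [Field K] [NumberField K] (α : 𝓞 K)
    (hgen : IntermediateField.adjoin ℚ {(α : K)} = ⊤)
    (hroot : (α : K) ^ 2 ^ r = (m : K)) :
    Algebra.adjoin ℤ {α} = ⊤ := by
  have hx : IsIntegral ℤ (α : K) := α.isIntegral_coe
  have hgen' : Algebra.adjoin ℚ {(α : K)} = ⊤ :=
    (IntermediateField.adjoin_simple_eq_top_iff_of_isAlgebraic hx.tower_top.isAlgebraic).1 hgen
  have hmin : minpoly ℚ (α : K) = X ^ 2 ^ r - C (m : ℚ) :=
    minpoly.eq_X_pow_sub_C_of_irreducible (by positivity) hF (by simpa using hroot)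
  refine RingOfIntegers.adjoin_eq_top_of_integralClosure_le
    (integralClosure_le_adjoin_of_minpoly_eq_X_pow_sub_C hx hgen' hmin fun p hp hpd => ?_)
  by_cases hpm : p ∣ m
  · refine Subalgebra.isPMaximal_adjoin_of_minpoly_isEisensteinAt (K := ℚ) hx hgen' hp ?_
    rw [minpoly.eq_of_minpoly_eq_map (K := ℚ) (f := X ^ 2 ^ r - C m) hx (by simp [hmin])]
    exact isEisensteinAt_X_pow_sub_C (by positivity) hp.not_isUnit hpm
      fun h => hp.not_isUnit (hm p (by rwa [← sq]))
  · have hp2 : p ∣ 2 := hp.dvd_of_dvd_pow (by exact_mod_cast hpd.resolve_right hpm)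
    refine (isPMaximal_adjoin_two_of_emod_four_eq_three hx hgen' hmin ?_).of_associated
      (hp.associated_of_dvd Int.prime_two hp2)
    have : ¬(2 : ℤ) ∣ m := fun h => hpm (hp2.trans h)
    omega

/-- If `m ≠ 1` is squarefree with `m ≡ 2` or `3 (mod 4)` and `x^(2^r) - m` is
irreducible over `ℚ`, then for `K = ℚ(α)` with `α` a root, `ℤ[α]` is integrally
closed, i.e. it equals the ring of integers of `K`. -/
theorem pure_two_power_field_integrally_closed
    (r : ℕ) (hr : 0 < r) (m : ℤ) (hm : Squarefree m) (hm1 : m ≠ 1)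
    (hmod : m % 4 = 2 ∨ m % 4 = 3)
    (hF : Irreducible ((X : ℚ[X]) ^ 2 ^ r - C (m : ℚ)))
    (K : Type*) [Field K] [NumberField K] (α : 𝓞 K)
    (hgen : IntermediateField.adjoin ℚ {(α : K)} = ⊤)
    (hroot : (α : K) ^ 2 ^ r = (m : K)) :
    Algebra.adjoin ℤ {α} = ⊤ :=
  pure_two_power_field_integrally_closed_general r m hm hmod hF K α hgen hroot
end

section
/- Let r be a positive integer and m ≠ 1 a squarefree rational integer whose residue modulo 49 is not in {1, 18, 19, 30, 31, 48}, such that F(x) = x^(7^r) − m is irreducible over ℚ. Let α be a complex root of F and K = ℚ(α). Then K is monogenic. -/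
open Polynomial NumberField

/-!
If `B` is a power basis of `K` with integral generator `α` and discriminant `d`, then
`d • 𝓞 K ⊆ ℤ[α]`; and if the minimal polynomial of some translate `α - c` is Eisenstein at a
prime `p`, then `p • z ∈ ℤ[α]` forces `z ∈ ℤ[α]`. So `ℤ[α] = 𝓞 K` as soon as every prime
dividing `d` admits such a translate.

For a root `α` of `x ^ n - m` the discriminant is `±n ^ n m ^ (n - 1)`. At a prime `p ∣ m`,
`x ^ n - m` is itself Eisenstein because `m` is squarefree. If `n = q ^ r` with `q` prime, the
translate `(x + m) ^ n - m` is Eisenstein at `q` exactly when `q ^ 2 ∤ m ^ n - m`, the middle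
coefficients being binomial coefficients divisible by `q` and `q ∣ m ^ n - m` by Fermat. For
`q = 7` this condition reads `m ^ 7 ≢ m (mod 49)`, because `x ^ 7 ^ r = x ^ 7` in `ℤ/49`, and the
solutions of `x ^ 7 = x` in `ℤ/49` are `0` and the six excluded residues.
-/

theorem Algebra.adjoin_singleton_sub_algebraMap {R A : Type*} [CommRing R] [Ring A] [Algebra R A]
    (x : A) (r : R) : adjoin R {x - algebraMap R A r} = adjoin R {x} := by
  apply le_antisymm <;> rw [adjoin_le_iff, Set.singleton_subset_iff]
  · exact sub_mem (self_mem_adjoin_singleton R x) (Subalgebra.algebraMap_mem _ r)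
  · simpa using add_mem (self_mem_adjoin_singleton R (x - algebraMap R A r))
      (Subalgebra.algebraMap_mem _ r)

theorem minpoly.sub_algebraMap_of_isIntegrallyClosed {R F L : Type*} [CommRing R] [IsDomain R]
    [IsIntegrallyClosed R] [Field F] [Algebra R F] [IsFractionRing R F] [Field L] [Algebra R L]
    [Algebra F L] [IsScalarTower R F L] {x : L} (hx : IsIntegral R x) (r : R) :
    minpoly R (x - algebraMap R L r) = (minpoly R x).comp (X + C r) := by
  apply map_injective (algebraMap R F) (IsFractionRing.injective R F)
  rw [← isIntegrallyClosed_eq_field_fractions' F (hx.sub isIntegral_algebraMap), map_comp,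
    ← isIntegrallyClosed_eq_field_fractions' F hx, IsScalarTower.algebraMap_apply R F L,
    minpoly.sub_algebraMap]
  simp

theorem minpoly.eq_of_irreducible_map_of_monic {R F L : Type*} [CommRing R] [IsDomain R]
    [IsIntegrallyClosed R] [Field F] [Algebra R F] [IsFractionRing R F] [Field L] [Algebra R L]
    [Algebra F L] [IsScalarTower R F L] {x : L} {f : R[X]}
    (hf : Irreducible (f.map (algebraMap R F))) (hx : Polynomial.aeval x f = 0) (hmo : f.Monic) :
    minpoly R x = f := by
  apply map_injective (algebraMap R F) (IsFractionRing.injective R F)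
  rw [← isIntegrallyClosed_eq_field_fractions' F ⟨f, hmo, hx⟩]
  exact (minpoly.eq_of_irreducible_of_monic hf (by rwa [aeval_map_algebraMap]) (hmo.map _)).symm

theorem Subalgebra.mem_of_smul_mem_of_forall_prime {R A : Type*} [CommRing R] [IsDomain R]
    [UniqueFactorizationMonoid R] [CommRing A] [Algebra R A] (S : Subalgebra R A)
    {d : R} (hd : d ≠ 0)
    (hS : ∀ p : R, Prime p → p ∣ d → ∀ z : A, IsIntegral R z → p • z ∈ S → z ∈ S)
    {z : A} (hz : IsIntegral R z) (hdz : d • z ∈ S) : z ∈ S := by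
  induction d using UniqueFactorizationMonoid.induction_on_prime generalizing z with
  | h₁ => exact absurd rfl hd
  | h₂ u hu =>
    obtain ⟨v, hv⟩ := hu.exists_left_inv
    simpa [smul_smul, hv] using S.smul_mem hdz v
  | h₃ a p ha hp ih =>
    rw [mul_comm, mul_smul] at hdz
    exact hS p hp (dvd_mul_right p a) z hz
      (ih ha (fun q hq hqa => hS q hq (hqa.mul_left p)) (hz.smul p) hdz)

theorem mem_adjoin_of_forall_prime_dvd_discr_isEisensteinAt {R K L : Type*} [CommRing R]
    [IsDomain R] [UniqueFactorizationMonoid R] [Field K] [Field L] [Algebra R K]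
    [IsFractionRing R K] [Algebra K L] [Algebra R L] [IsScalarTower R K L]
    [Algebra.IsSeparable K L] (B : PowerBasis K L) (hB : IsIntegral R B.gen) {d : R}
    (hd : Algebra.discr K B.basis = algebraMap R K d)
    (heis : ∀ p : R, Prime p → p ∣ d →
      ∃ c : R, ((minpoly R B.gen).comp (X + C c)).IsEisensteinAt (Ideal.span {p}))
    {z : L} (hz : IsIntegral R z) : z ∈ Algebra.adjoin R {B.gen} := by
  have := B.finite
  have hd0 : d ≠ 0 := by
    rintro rfl
    exact Algebra.discr_not_zero_of_basis K B.basis (by rw [hd, map_zero])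
  have hdz := Algebra.discr_mul_isIntegral_mem_adjoin K hB hz
  rw [hd, algebraMap_smul] at hdz
  refine Subalgebra.mem_of_smul_mem_of_forall_prime _ hd0 (fun p hp hpd z hz hpz => ?_) hz hdz
  obtain ⟨c, hc⟩ := heis p hp hpd
  have hadj := Algebra.adjoin_singleton_sub_algebraMap B.gen c
  have htop : Algebra.adjoin K {B.gen - algebraMap R L c} = ⊤ := by
    rw [IsScalarTower.algebraMap_apply R K L, Algebra.adjoin_singleton_sub_algebraMap,
      B.adjoin_gen_eq_top]
  let B' := PowerBasis.ofAdjoinEqTop (IsIntegral.of_finite K _) htop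
  have hzB' := mem_adjoin_of_smul_prime_smul_of_minpoly_isEisensteinAt (K := K) (B := B') hp
    (hB.sub isIntegral_algebraMap) hz (by rwa [PowerBasis.ofAdjoinEqTop_gen, hadj])
    (by rwa [PowerBasis.ofAdjoinEqTop_gen,
      minpoly.sub_algebraMap_of_isIntegrallyClosed (F := K) hB])
  rwa [PowerBasis.ofAdjoinEqTop_gen, hadj] at hzB'

theorem NumberField.RingOfIntegers.adjoin_eq_top_of_forall_mem {K : Type*} [Field K]
    [NumberField K] {θ : 𝓞 K} (h : ∀ z : K, IsIntegral ℤ z → z ∈ Algebra.adjoin ℤ {(θ : K)}) :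
    Algebra.adjoin ℤ {θ} = ⊤ := by
  refine eq_top_iff.2 fun x _ => ?_
  obtain ⟨y, hy, hyx⟩ := (AlgHom.map_adjoin_singleton
    (algebraMap (𝓞 K) K).toIntAlgHom θ).symm ▸ h x x.isIntegral_coe
  rwa [← RingOfIntegers.coe_injective hyx]

theorem Algebra.discr_of_minpoly_eq_X_pow_sub_C {F L : Type*} [Field F] [Field L] [Algebra F L]
    [Algebra.IsSeparable F L] (B : PowerBasis F L) {n : ℕ} {a : F}
    (hB : minpoly F B.gen = X ^ n - C a) :
    discr F B.basis = (-1) ^ (n * (n - 1) / 2) * (n ^ n * ((-1) ^ (n + 1) * a) ^ (n - 1)) := by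
  have hdim : B.dim = n := by rw [← B.natDegree_minpoly, hB, natDegree_X_pow_sub_C]
  have hn : n ≠ 0 := hdim ▸ B.dim_pos.ne'
  have hnorm : Algebra.norm F B.gen = (-1) ^ (n + 1) * a := by
    rw [Algebra.PowerBasis.norm_gen_eq_coeff_zero_minpoly, hdim, hB, coeff_sub, coeff_X_pow,
      if_neg (Ne.symm hn), coeff_C, if_pos rfl]
    ring
  have := B.finite
  have hrank : Module.finrank F L = n := B.finrank.trans hdim
  rw [discr_powerBasis_eq_norm, hrank, hB, derivative_sub, derivative_C, sub_zero,
    derivative_X_pow, map_mul, aeval_C, map_pow, aeval_X, map_mul, Algebra.norm_algebraMap,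
    map_pow, hnorm, hrank]

theorem Prime.dvd_mul_of_dvd_discr_X_pow_sub_C {R : Type*} [CommRing R] {p a : R} (hp : Prime p)
    {n k : ℕ} (h : p ∣ (-1) ^ k * ((n : R) ^ n * ((-1) ^ (n + 1) * a) ^ (n - 1))) :
    p ∣ n * a := by
  have hsign (j : ℕ) : ¬ p ∣ (-1) ^ j := fun h =>
    hp.not_isUnit (isUnit_of_dvd_unit h (isUnit_neg_one.pow j))
  rcases hp.dvd_mul.1 h with h | h
  · exact absurd h (hsign k)
  rcases hp.dvd_mul.1 h with h | h
  · exact dvd_mul_of_dvd_left (hp.dvd_of_dvd_pow h) a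
  rcases hp.dvd_mul.1 (hp.dvd_of_dvd_pow h) with h | h
  · exact absurd h (hsign (n + 1))
  · exact dvd_mul_of_dvd_right h _

theorem Polynomial.isEisensteinAt_X_pow_sub_C_s16 {R : Type*} [CommRing R] {n : ℕ} (hn : n ≠ 0)
    {p m : R} (hp : Prime p) (hpm : p ∣ m) (hsq : ¬ p ^ 2 ∣ m) :
    ((X : R[X]) ^ n - C m).IsEisensteinAt (Ideal.span {p}) := by
  have : Nontrivial R := ⟨⟨p, 0, hp.ne_zero⟩⟩
  refine ⟨?_, fun {i} hi => ?_, ?_⟩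
  · rw [(monic_X_pow_sub_C m hn).leadingCoeff, Ideal.mem_span_singleton]
    exact hp.not_dvd_one
  · rw [natDegree_X_pow_sub_C] at hi
    rw [coeff_sub, coeff_X_pow, if_neg hi.ne, coeff_C]
    split <;> simp [Ideal.mem_span_singleton, hpm]
  · rwa [coeff_sub, coeff_X_pow, if_neg (Ne.symm hn), coeff_C, if_pos rfl, zero_sub, neg_mem_iff,
      Ideal.span_singleton_pow, Ideal.mem_span_singleton]

theorem Polynomial.isEisensteinAt_X_pow_sub_C_comp_X_add_C {p r : ℕ} (hp : p.Prime)
    {m : ℤ} (hsq : ¬ (p : ℤ) ^ 2 ∣ m ^ p ^ r - m) :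
    (((X : ℤ[X]) ^ p ^ r - C m).comp (X + C m)).IsEisensteinAt (Ideal.span {(p : ℤ)}) := by
  have hmonic := (monic_X_pow_sub_C m (pow_ne_zero r hp.ne_zero)).comp_X_add_C m
  have hdeg : (((X : ℤ[X]) ^ p ^ r - C m).comp (X + C m)).natDegree = p ^ r := by
    rw [natDegree_comp, natDegree_X_pow_sub_C, natDegree_X_add_C, mul_one]
  have hcoeff (i : ℕ) : (((X : ℤ[X]) ^ p ^ r - C m).comp (X + C m)).coeff i =
      m ^ (p ^ r - i) * (p ^ r).choose i - if i = 0 then m else 0 := by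
    rw [sub_comp, pow_comp, X_comp, C_comp, coeff_sub, coeff_X_add_C_pow, coeff_C]
  have hcoeff_zero : (((X : ℤ[X]) ^ p ^ r - C m).comp (X + C m)).coeff 0 = m ^ p ^ r - m := by
    rw [hcoeff, if_pos rfl, Nat.sub_zero, Nat.choose_zero_right, Nat.cast_one, mul_one]
  refine ⟨?_, fun {i} hi => ?_, ?_⟩
  · rw [hmonic.leadingCoeff, Ideal.mem_span_singleton]
    exact Int.natCast_dvd_natCast.not.2 hp.not_dvd_one
  · rw [hdeg] at hi
    rw [Ideal.mem_span_singleton]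
    rcases eq_or_ne i 0 with rfl | hi0
    · have : Fact p.Prime := ⟨hp⟩
      rw [hcoeff_zero, ← ZMod.intCast_zmod_eq_zero_iff_dvd]
      push_cast
      rw [ZMod.pow_card_pow, sub_self]
    · rw [hcoeff, if_neg hi0, sub_zero]
      exact dvd_mul_of_dvd_right (Int.natCast_dvd_natCast.2 (hp.dvd_choose_pow hi0 hi.ne)) _
  · rwa [hcoeff_zero, Ideal.span_singleton_pow, Ideal.mem_span_singleton]

theorem exists_isEisensteinAt_X_pow_prime_pow_sub_C_comp {q r : ℕ} (hq : q.Prime) {m : ℤ}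
    (hm : Squarefree m) (hq2 : ¬ (q : ℤ) ^ 2 ∣ m ^ q ^ r - m) {p : ℤ} (hp : Prime p)
    (hpd : p ∣ q ^ r * m) :
    ∃ c : ℤ, (((X : ℤ[X]) ^ q ^ r - C m).comp (X + C c)).IsEisensteinAt (Ideal.span {p}) := by
  rcases hp.dvd_mul.1 hpd with hpq | hpm
  · have hassoc : Associated p q :=
      (hp.dvd_prime_iff_associated (Nat.prime_iff_prime_int.1 hq)).1 (hp.dvd_of_dvd_pow hpq)
    refine ⟨m, ?_⟩
    rw [Ideal.span_singleton_eq_span_singleton.2 hassoc]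
    exact isEisensteinAt_X_pow_sub_C_comp_X_add_C hq hq2
  · refine ⟨0, ?_⟩
    rw [map_zero, add_zero, comp_X]
    exact isEisensteinAt_X_pow_sub_C_s16 (pow_ne_zero r hq.ne_zero) hp hpm
      fun h => hp.not_isUnit (hm p (by rwa [← sq]))

theorem exists_adjoin_eq_top_of_pow_prime_pow_eq {K : Type*} [Field K] [NumberField K]
    {q r : ℕ} (hq : q.Prime) {m : ℤ} (hm : Squarefree m) (hq2 : ¬ (q : ℤ) ^ 2 ∣ m ^ q ^ r - m)
    (hF : Irreducible ((X : ℚ[X]) ^ q ^ r - C (m : ℚ))) {α : K}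
    (hgen : IntermediateField.adjoin ℚ {α} = ⊤) (hroot : α ^ q ^ r = (m : K)) :
    ∃ θ : 𝓞 K, Algebra.adjoin ℤ {θ} = ⊤ := by
  set n := q ^ r
  have hn : n ≠ 0 := pow_ne_zero r hq.ne_zero
  have hmonic : ((X : ℤ[X]) ^ n - C m).Monic := monic_X_pow_sub_C m hn
  have hαroot : aeval α ((X : ℤ[X]) ^ n - C m) = 0 := by simp [hroot]
  have hint : IsIntegral ℤ α := ⟨_, hmonic, hαroot⟩
  have hminℤ : minpoly ℤ α = X ^ n - C m :=
    minpoly.eq_of_irreducible_map_of_monic (F := ℚ) (by simpa using hF) hαroot hmonic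
  have hminℚ : minpoly ℚ α = X ^ n - C (m : ℚ) :=
    (minpoly.eq_of_irreducible_of_monic hF (by simp [hroot]) (monic_X_pow_sub_C _ hn)).symm
  let B := PowerBasis.ofAdjoinEqTop (IsIntegral.of_finite ℚ α)
    (IntermediateField.adjoin_eq_top_iff.1 hgen)
  have hdiscr : Algebra.discr ℚ B.basis = algebraMap ℤ ℚ
      ((-1) ^ (n * (n - 1) / 2) * ((n : ℤ) ^ n * ((-1) ^ (n + 1) * m) ^ (n - 1))) := by
    rw [Algebra.discr_of_minpoly_eq_X_pow_sub_C B hminℚ]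
    simp
  refine ⟨⟨α, hint⟩, RingOfIntegers.adjoin_eq_top_of_forall_mem fun z hz =>
    mem_adjoin_of_forall_prime_dvd_discr_isEisensteinAt B hint hdiscr (fun p hp hpd => ?_) hz⟩
  rw [PowerBasis.ofAdjoinEqTop_gen, hminℤ]
  exact exists_isEisensteinAt_X_pow_prime_pow_sub_C_comp hq hm hq2 hp
    (by exact_mod_cast hp.dvd_mul_of_dvd_discr_X_pow_sub_C hpd)

set_option maxRecDepth 8000 in
theorem ZMod.pow_forty_nine_eq_pow_seven (x : ZMod 49) : x ^ 49 = x ^ 7 := by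
  revert x; decide

theorem ZMod.pow_seven_pow {r : ℕ} (hr : 0 < r) (x : ZMod 49) : x ^ 7 ^ r = x ^ 7 := by
  induction r, hr using Nat.le_induction with
  | base => rw [pow_one]
  | succ k _ ih => rw [pow_succ, pow_mul, ih, ← pow_mul, ZMod.pow_forty_nine_eq_pow_seven]

set_option maxRecDepth 8000 in
theorem ZMod.eq_zero_or_val_mem_of_pow_seven_eq_self :
    ∀ x : ZMod 49, x ^ 7 = x →
      x = 0 ∨ (x.val : ℤ) ∈ ({1, 18, 19, 30, 31, 48} : Finset ℤ) := by
  decide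

theorem Int.not_sq_dvd_pow_seven_pow_sub_self {r : ℕ} (hr : 0 < r) {m : ℤ} (hm : Squarefree m)
    (hmod : m % 49 ∉ ({1, 18, 19, 30, 31, 48} : Finset ℤ)) :
    ¬ (7 : ℤ) ^ 2 ∣ m ^ 7 ^ r - m := by
  intro h
  have hfix : (m : ZMod 49) ^ 7 = m := by
    have := (ZMod.intCast_zmod_eq_zero_iff_dvd (m ^ 7 ^ r - m) 49).2 (by simpa using h)
    push_cast at this
    rwa [ZMod.pow_seven_pow hr, sub_eq_zero] at this
  rcases ZMod.eq_zero_or_val_mem_of_pow_seven_eq_self _ hfix with h0 | hval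
  · have h49 : (7 : ℤ) * 7 ∣ m := (ZMod.intCast_zmod_eq_zero_iff_dvd m 49).1 h0
    exact absurd (hm 7 h49) (by decide)
  · exact hmod (by rwa [ZMod.val_intCast] at hval)

theorem pure_seven_power_field_monogenic_general
    (r : ℕ) (hr : 0 < r) (m : ℤ) (hm : Squarefree m)
    (hmod : m % 49 ∉ ({1, 18, 19, 30, 31, 48} : Finset ℤ))
    (hF : Irreducible ((X : ℚ[X]) ^ 7 ^ r - C (m : ℚ)))
    (K : Type*) [Field K] [NumberField K] (α : K)
    (hgen : IntermediateField.adjoin ℚ {α} = ⊤)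
    (hroot : α ^ 7 ^ r = (m : K)) :
    ∃ θ : 𝓞 K, Algebra.adjoin ℤ {θ} = ⊤ :=
  have hsq : ¬ ((7 : ℕ) : ℤ) ^ 2 ∣ m ^ 7 ^ r - m := by
    exact_mod_cast Int.not_sq_dvd_pow_seven_pow_sub_self hr hm hmod
  exists_adjoin_eq_top_of_pow_prime_pow_eq (by norm_num) hm hsq hF hgen hroot

/-- If `m ≠ 1` is squarefree, its residue modulo `49` is not in
`{1, 18, 19, 30, 31, 48}`, and `x^(7^r) - m` is irreducible over `ℚ`, then
`K = ℚ(α)` is monogenic, where `α` is a root. -/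
theorem pure_seven_power_field_monogenic
    (r : ℕ) (hr : 0 < r) (m : ℤ) (hm : Squarefree m) (hm1 : m ≠ 1)
    (hmod : m % 49 ∉ ({1, 18, 19, 30, 31, 48} : Finset ℤ))
    (hF : Irreducible ((X : ℚ[X]) ^ 7 ^ r - C (m : ℚ)))
    (K : Type*) [Field K] [NumberField K] (α : K)
    (hgen : IntermediateField.adjoin ℚ {α} = ⊤)
    (hroot : α ^ 7 ^ r = (m : K)) :
    ∃ θ : 𝓞 K, Algebra.adjoin ℤ {θ} = ⊤ :=
  pure_seven_power_field_monogenic_general r hr m hm hmod hF K α hgen hroot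
end
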